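/- Let K = 𝔽₂₅ be the field with 25 elements and let a ∈ K satisfy a² + 4a + 2 = 0; set λ = a⁴, t₁ = a¹⁶, and t₂ = a. Let c₃, c₄, c₈, c₉ ∈ K be the coefficients of x³, x⁴, x⁸, x⁹ in the polynomial (x(x−1)(x−λ)(x−t₁)(x−t₂))² ∈ K[x], and form the matrix M = [[c₄, c₃],[c₉, c₈]] over K. Then the matrix N = M^{(5)} · M, where M^{(5)} is obtained from M by raising each entry to the 5th power, has rank exactly 1. -/
import Mathlib


open Polynomial

instance : Fact (Nat.Prime 5) := ⟨by norm_num⟩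

/-- Let `K = 𝔽₂₅`, `a ∈ K` with `a² + 4a + 2 = 0`, `λ = a⁴`,
`t₁ = a¹⁶`, `t₂ = a`.  With `c₃, c₄, c₈, c₉ ∈ K` the coefficients of
`x³, x⁴, x⁸, x⁹` in `(x(x−1)(x−λ)(x−t₁)(x−t₂))² ∈ K[x]` and
`M = [[c₄, c₃], [c₉, c₈]]`, the matrix `N = M⁽⁵⁾ ⬝ M` (entries of `M` raised to
the 5th power) has rank exactly 1. -/
theorem stmt5 (a : GaloisField 5 2) (ha : a ^ 2 + 4 * a + 2 = 0)
    (lam t1 t2 : GaloisField 5 2)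
    (hlam : lam = a ^ 4) (ht1 : t1 = a ^ 16) (ht2 : t2 = a)
    (f : Polynomial (GaloisField 5 2))
    (hf : f = X * (X - 1) * (X - C lam) * (X - C t1) * (X - C t2))
    (M : Matrix (Fin 2) (Fin 2) (GaloisField 5 2))
    (hM : M = !![(f ^ 2).coeff 4, (f ^ 2).coeff 3; (f ^ 2).coeff 9, (f ^ 2).coeff 8])
    (N : Matrix (Fin 2) (Fin 2) (GaloisField 5 2))
    (hN : N = (M.map fun x => x ^ 5) * M) :
    N.rank = 1 := by
  have h5s : (5 : GaloisField 5 2) = 0 := by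
    have := CharP.cast_eq_zero (GaloisField 5 2) 5
    exact_mod_cast this
  have h2 : a ^ 2 = a + 3 := by linear_combination ha - (a + 1) * h5s
  have h4 : a ^ 4 = 2 + 2 * a := by
    linear_combination (4 + a + a ^ 2) * h2 + (2 + a) * h5s
  have h16a : a ^ 16 = 3 + 3 * a := by
    linear_combination (75316 + 32689*a + 14209*a^2 + 6160*a^3 + 2683*a^4 + 1159*a^5
      + 508*a^6 + 217*a^7 + 97*a^8 + 40*a^9 + 19*a^10 + 7*a^11 + 4*a^12 + a^13 + a^14) * h2
      + (45189 + 34676*a) * h5s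
  have h5p : (5 : Polynomial (GaloisField 5 2)) = 0 := by
    rw [← map_ofNat (C : GaloisField 5 2 →+* Polynomial (GaloisField 5 2)) 5, h5s, map_zero]
  have hY : (C a : Polynomial (GaloisField 5 2)) ^ 2 = C a + 3 := by
    rw [← map_pow, h2, map_add, map_ofNat]
  have hfe : f = X ^ 5 + (4 + 4 * C a) * X ^ 4 + (4 + 4 * C a) * X ^ 3
      + 2 * X ^ 2 + (4 + 2 * C a) * X := by
    rw [hf, hlam, ht1, ht2, h4, h16a]
    simp only [map_add, map_mul, map_ofNat]
    linear_combination (18*X + 6*X*(C a) - 29*X^2 - 6*X^2*(C a) + 11*X^3) * hY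
      + (10*X + 8*X*(C a) - 19*X^2 - 14*X^2*(C a) + 8*X^3 + 6*X^3*(C a)
        - 2*X^4 - 2*X^4*(C a)) * h5p
  have hf2 : f ^ 2 = C 3 * X ^ 2 + C (1 + 3*a) * X ^ 3 + C (4 + 4*a) * X ^ 4 + X ^ 5
      + C (3 + 3*a) * X ^ 6 + C (2 + a) * X ^ 7 + C (2 + a) * X ^ 8
      + C (3 + 3*a) * X ^ 9 + X ^ 10 := by
    rw [hfe]
    simp only [map_add, map_mul, map_ofNat, map_one]
    linear_combination (4*X^2 + 16*X^4 + 16*X^5 + 16*X^6 + 32*X^7 + 16*X^8) * hY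
      + (5*X^2 + 4*X^2*(C a) + 3*X^3 + X^3*(C a) + 16*X^4 + 12*X^4*(C a)
        + 19*X^5 + 16*X^5*(C a) + 17*X^6 + 13*X^6*(C a) + 26*X^7 + 19*X^7*(C a)
        + 14*X^8 + 11*X^8*(C a) + X^9 + X^9*(C a)) * h5p
  have hc3 : (f ^ 2).coeff 3 = 1 + 3*a := by
    rw [hf2]; simp only [coeff_add, coeff_C_mul, coeff_X_pow]; norm_num
  have hc4 : (f ^ 2).coeff 4 = 4 + 4*a := by
    rw [hf2]; simp only [coeff_add, coeff_C_mul, coeff_X_pow]; norm_num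
  have hc8 : (f ^ 2).coeff 8 = 2 + a := by
    rw [hf2]; simp only [coeff_add, coeff_C_mul, coeff_X_pow]; norm_num
  have hc9 : (f ^ 2).coeff 9 = 3 + 3*a := by
    rw [hf2]; simp only [coeff_add, coeff_C_mul, coeff_X_pow]; norm_num
  have hME : M = !![4 + 4*a, 1 + 3*a; 3 + 3*a, 2 + a] := by
    rw [hM, hc3, hc4, hc8, hc9]
  have hmap : M.map (fun x => x ^ 5) = !![3 + a, 4 + 2*a; 1 + 2*a, 3 + 4*a] := by
    rw [hME]
    ext i j
    fin_cases i <;> fin_cases j <;> simp [Matrix.map_apply]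
    · linear_combination (48128 + 19456*a + 6144*a^2 + 1024*a^3) * h2 + (29081 + 22323*a) * h5s
    · linear_combination (3681 + 1647*a + 648*a^2 + 243*a^3) * h2 + (2208 + 1727*a) * h5s
    · linear_combination (11421 + 4617*a + 1458*a^2 + 243*a^3) * h2 + (6901 + 5297*a) * h5s
    · linear_combination (167 + 54*a + 11*a^2 + a^3) * h2 + (106 + 81*a) * h5s
  have hNE : N = !![4 + 4*a, 1 + 3*a; 3 + 3*a, 2 + a] := by
    rw [hN, hmap, hME]
    ext i j
    fin_cases i <;> fin_cases j <;>
      simp [Matrix.mul_apply, Fin.sum_univ_two]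
    · linear_combination 10 * h2 + (10 + 8*a) * h5s
    · linear_combination 5 * h2 + (5 + 4*a) * h5s
    · linear_combination 20 * h2 + (14 + 10*a) * h5s
    · linear_combination 10 * h2 + (7 + 5*a) * h5s
  have hdecomp : (!![4 + 4*a, 1 + 3*a; 3 + 3*a, 2 + a] : Matrix (Fin 2) (Fin 2) (GaloisField 5 2))
      = (!![1; 2] : Matrix (Fin 2) (Fin 1) (GaloisField 5 2)) * (!![4 + 4*a, 1 + 3*a] : Matrix (Fin 1) (Fin 2) (GaloisField 5 2)) := by
    ext i j
    fin_cases i <;> fin_cases j <;>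
      simp [Matrix.mul_apply]
    · linear_combination (-1 - a) * h5s
    · linear_combination (-a) * h5s
  apply le_antisymm
  · rw [hNE, hdecomp]
    refine le_trans (Matrix.rank_mul_le_left _ _) (le_trans (Matrix.rank_le_card_width _) ?_)
    simp
  · rw [Nat.one_le_iff_ne_zero]
    intro h0
    rw [Matrix.rank] at h0
    have hr : LinearMap.range N.mulVecLin = ⊥ := Submodule.finrank_eq_zero.mp h0
    have hz : N.mulVecLin = 0 := LinearMap.range_eq_bot.mp hr
    have h00 : N.mulVec ![1, 0] = 0 := by
      have : N.mulVecLin ![1, 0] = 0 := by rw [hz]; rfl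
      simpa [Matrix.mulVecLin] using this
    have hentry : N 0 0 = 0 := by
      have := congrFun h00 0
      simpa [Matrix.mulVec, dotProduct, Fin.sum_univ_two] using this
    rw [hNE] at hentry
    have hentry2 : 4 + 4 * a = 0 := by simpa using hentry
    have hone : (1 : GaloisField 5 2) = 0 := by
      linear_combination (-(a + 3)) * hentry2 + 4 * ha + h5s
    exact one_ne_zero hone
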